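/- arXiv:1311.0692 — 4 statements merged into one kernel-verified Lean document; each statement's English description precedes it below -/
import Mathlib

section
/- Let R, K_R : ℝ → ℝ be differentiable functions with R > 0, and define F(l) = R(l)·(R(l)²K_R(l)² − R'(l)² + 1). If the constraint equations 8πρ = K_R(K_R + 2K_L) − (2(RR')' − R'² − 1)/R² and 4πJ = K_R' + R'(K_R − K_L)/R hold, then F'(l) = 4π(kρ + pJ)R³ where k = 2R'/R and p = 2K_R. -/
/-!
With `H` and `M` the right-hand sides of the Hamiltonian and momentum constraints,
`F' = R' R² H + 2 K_R R³ M` is a polynomial identity once `(R R')' = R'² + R R''` is substituted;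
substituting `H = 8πρ` and `M = 4πJ` gives the claim.
-/

open Real

theorem hasDerivAt_mul_sq_mul_sq_sub_sq_add_one {R P K : ℝ → ℝ} {r p k l : ℝ}
    (hR : HasDerivAt R r l) (hP : HasDerivAt P p l) (hK : HasDerivAt K k l) :
    HasDerivAt (fun x => R x * ((R x) ^ 2 * (K x) ^ 2 - (P x) ^ 2 + 1))
      (r * ((R l) ^ 2 * (K l) ^ 2 - (P l) ^ 2 + 1)
        + R l * (2 * R l * r * (K l) ^ 2 + (R l) ^ 2 * (2 * K l * k) - 2 * P l * p)) l := by
  have hinner := (((hR.fun_pow 2).fun_mul (hK.fun_pow 2)).fun_sub (hP.fun_pow 2)).add_const 1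
  refine (hR.fun_mul hinner).congr_deriv ?_
  norm_num

theorem deriv_F_eq_constraint_combination {R R₁ R₂ K K₁ KL : ℝ} (hR : R ≠ 0) :
    R₁ * (R ^ 2 * K ^ 2 - R₁ ^ 2 + 1) + R * (2 * R * R₁ * K ^ 2 + R ^ 2 * (2 * K * K₁) - 2 * R₁ * R₂)
      = R₁ * R ^ 2 * (K * (K + 2 * KL) - (2 * (R₁ * R₁ + R * R₂) - R₁ ^ 2 - 1) / R ^ 2)
        + 2 * K * R ^ 3 * (K₁ + R₁ * (K - KL) / R) := by
  field_simp
  ring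

theorem auxiliary_F_derivative
    (R KR KL ρ J : ℝ → ℝ)
    (hRpos : ∀ l, R l > 0)
    (hR : Differentiable ℝ R)
    (hR' : Differentiable ℝ (deriv R))
    (hKR : Differentiable ℝ KR)
    (hHam : ∀ l, 8 * π * ρ l =
      KR l * (KR l + 2 * KL l)
        - (2 * deriv (fun x => R x * deriv R x) l - (deriv R l) ^ 2 - 1) / (R l) ^ 2)
    (hMom : ∀ l, 4 * π * J l =
      deriv KR l + deriv R l * (KR l - KL l) / R l) :
    ∀ l, deriv (fun x => R x * ((R x) ^ 2 * (KR x) ^ 2 - (deriv R x) ^ 2 + 1)) l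
      = 4 * π * ((2 * deriv R l / R l) * ρ l + (2 * KR l) * J l) * (R l) ^ 3 := by
  intro l
  have hRl := (hR l).hasDerivAt
  have hR'l := (hR' l).hasDerivAt
  have hRne : R l ≠ 0 := (hRpos l).ne'
  have hRR' : deriv (fun x => R x * deriv R x) l
      = deriv R l * deriv R l + R l * deriv (deriv R) l := (hRl.mul hR'l).deriv
  have hHam' := hHam l
  rw [hRR'] at hHam'
  rw [(hasDerivAt_mul_sq_mul_sq_sub_sq_add_one hRl hR'l (hKR l).hasDerivAt).deriv,
    deriv_F_eq_constraint_combination (KL := KL l) hRne, ← hHam', ← hMom]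
  field_simp
  ring
end

section
/- Suppose R, K_R : ℝ → ℝ are differentiable with R > 0, and suppose F(l) = R(R²K_R² − R'² + 1) satisfies F'(l) = 4π(kρ + pJ)R³ with k = 2R'/R, p = 2K_R, where ρ ≥ |J| and θ₊ = k + p ≥ 0, θ₋ = k − p ≥ 0 on the interval [l₀, L₀]. Then F(L₀) ≥ F(l₀). -/
open Real Set

theorem F_monotone
    (R KR ρ J : ℝ → ℝ) (l₀ L₀ : ℝ) (hle : l₀ ≤ L₀)
    (hRpos : ∀ l ∈ Icc l₀ L₀, R l > 0)
    (F : ℝ → ℝ)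
    (hF : ∀ l, F l = R l * ((R l) ^ 2 * (KR l) ^ 2 - (deriv R l) ^ 2 + 1))
    (hF' : ∀ l ∈ Icc l₀ L₀, HasDerivAt F
      (4 * π * ((2 * deriv R l / R l) * ρ l + (2 * KR l) * J l) * (R l) ^ 3) l)
    (hDEC : ∀ l ∈ Icc l₀ L₀, ρ l ≥ |J l|)
    (hθp : ∀ l ∈ Icc l₀ L₀, 2 * deriv R l / R l + 2 * KR l ≥ 0)
    (hθm : ∀ l ∈ Icc l₀ L₀, 2 * deriv R l / R l - 2 * KR l ≥ 0) :
    F L₀ ≥ F l₀ := by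
  have key : ∀ l ∈ Icc l₀ L₀,
      0 ≤ 4 * π * ((2 * deriv R l / R l) * ρ l + (2 * KR l) * J l) * (R l) ^ 3 := by
    intro l hl
    have hR := hRpos l hl
    have h1 := hθp l hl
    have h2 := hθm l hl
    have h3 := hDEC l hl
    have hJ1 : J l ≤ |J l| := le_abs_self _
    have hJ2 : -|J l| ≤ J l := neg_abs_le _
    have hsum : 0 ≤ (2 * deriv R l / R l) * ρ l + (2 * KR l) * J l := by
      nlinarith [mul_nonneg h1 (by linarith : (0:ℝ) ≤ ρ l + J l),
        mul_nonneg h2 (by linarith : (0:ℝ) ≤ ρ l - J l)]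
    positivity
  have hmono : MonotoneOn F (Icc l₀ L₀) := by
    apply monotoneOn_of_deriv_nonneg (convex_Icc l₀ L₀)
    · intro l hl
      exact (hF' l hl).continuousAt.continuousWithinAt
    · intro l hl
      exact (hF' l (interior_subset hl)).differentiableAt.differentiableWithinAt
    · intro l hl
      rw [(hF' l (interior_subset hl)).deriv]
      exact key l (interior_subset hl)
  exact hmono (left_mem_Icc.mpr hle) (right_mem_Icc.mpr hle) hle
end

section
/- Localized Penrose inequality in spherical symmetry: Let R, K_R : ℝ → ℝ be differentiable with R > 0 on [l₀, L₀]. Assume: (i) F(l) = R(R²K_R² − R'² + 1) satisfies F' = 4π(kρ + pJ)R³ with ρ ≥ |J| (dominant energy); (ii) θ₊(l₀) = 0 (Σ_{l₀} is a future apparent horizon) and θ₊ ≥ 0, θ₋ ≥ 0 on (l₀, L₀]; (iii) R'(L₀)² − R(L₀)²K_R(L₀)² > 0 (spacelike mean curvature vector at the outer boundary). Then 2·m_LY(Σ_{L₀}) ≥ R(l₀), where 2·m_LY(Σ_{L₀}) = R(L₀)(2 − 2√(R'(L₀)² − R(L₀)²K_R(L₀)²)). -/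
open Real Set

theorem localized_penrose_inequality
    (R KR ρ J : ℝ → ℝ) (l₀ L₀ : ℝ) (hle : l₀ ≤ L₀)
    (hRdiff : Differentiable ℝ R) (hKRdiff : Differentiable ℝ KR)
    (hRpos : ∀ l ∈ Icc l₀ L₀, R l > 0)
    (F : ℝ → ℝ)
    (hF : ∀ l, F l = R l * ((R l) ^ 2 * (KR l) ^ 2 - (deriv R l) ^ 2 + 1))
    (hF' : ∀ l ∈ Icc l₀ L₀, HasDerivAt F
      (4 * π * ((2 * deriv R l / R l) * ρ l + (2 * KR l) * J l) * (R l) ^ 3) l)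
    (hDEC : ∀ l ∈ Icc l₀ L₀, ρ l ≥ |J l|)
    (hhor : 2 * (deriv R l₀ + R l₀ * KR l₀) / R l₀ = 0)
    (hθp : ∀ l ∈ Ioc l₀ L₀, 2 * (deriv R l + R l * KR l) / R l ≥ 0)
    (hθm : ∀ l ∈ Ioc l₀ L₀, 2 * (deriv R l - R l * KR l) / R l ≥ 0)
    (hsp : (deriv R L₀) ^ 2 - (R L₀) ^ 2 * (KR L₀) ^ 2 > 0) :
    R L₀ * (2 - 2 * Real.sqrt ((deriv R L₀) ^ 2 - (R L₀) ^ 2 * (KR L₀) ^ 2))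
      ≥ R l₀ := by
  -- F is monotone on [l₀, L₀]
  have hmono : MonotoneOn F (Icc l₀ L₀) := by
    apply monotoneOn_of_deriv_nonneg (convex_Icc l₀ L₀)
    · intro x hx
      exact ((hF' x hx).continuousAt).continuousWithinAt
    · intro x hx
      rw [interior_Icc] at hx
      exact ((hF' x (Ioo_subset_Icc_self hx)).differentiableAt).differentiableWithinAt
    · intro x hx
      rw [interior_Icc] at hx
      have hxIcc : x ∈ Icc l₀ L₀ := Ioo_subset_Icc_self hx
      have hxIoc : x ∈ Ioc l₀ L₀ := ⟨hx.1, hx.2.le⟩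
      rw [(hF' x hxIcc).deriv]
      have hR := hRpos x hxIcc
      have h1 := hθp x hxIoc
      have h2 := hθm x hxIoc
      have hd := hDEC x hxIcc
      have hb : ρ x - J x ≥ 0 := by
        have := le_abs_self (J x); linarith
      have ha' : ρ x + J x ≥ 0 := by
        have := neg_abs_le (J x); linarith
      -- key identity: 2*(kρ + pJ) = θ₊(ρ+J) + θ₋(ρ−J)
      have hkey : (2 * deriv R x / R x) * ρ x + (2 * KR x) * J x =
          ((2 * (deriv R x + R x * KR x) / R x) * (ρ x + J x)
            + (2 * (deriv R x - R x * KR x) / R x) * (ρ x - J x)) / 2 := by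
        field_simp
        ring
      rw [hkey]
      have hπ := Real.pi_pos
      positivity
  have hle' : F l₀ ≤ F L₀ :=
    hmono (left_mem_Icc.mpr hle) (right_mem_Icc.mpr hle) hle
  have hR0 : R l₀ > 0 := hRpos l₀ (left_mem_Icc.mpr hle)
  have hRL : R L₀ > 0 := hRpos L₀ (right_mem_Icc.mpr hle)
  have hhor' : deriv R l₀ + R l₀ * KR l₀ = 0 := by
    rcases div_eq_zero_iff.mp hhor with h | h
    · linarith
    · exact absurd h hR0.ne'
  have hFl0 : F l₀ = R l₀ := by
    rw [hF l₀]
    have : deriv R l₀ = -(R l₀ * KR l₀) := by linarith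
    rw [this]; ring
  set Q := (deriv R L₀) ^ 2 - (R L₀) ^ 2 * (KR L₀) ^ 2 with hQdef
  have hFL : F L₀ = R L₀ * (1 - Q) := by rw [hF L₀]; ring
  have hsq : Real.sqrt Q ^ 2 = Q := Real.sq_sqrt hsp.le
  nlinarith [sq_nonneg (1 - Real.sqrt Q), hle', hFl0, hFL, hRL, hsq]
end

section
/- In the time-symmetric case (K_R ≡ 0, K_L ≡ 0), under the hypotheses of the localized Penrose inequality, the Brown-York mass of the round outer boundary sphere, m_BY(Σ_{L₀}) = R(L₀)(1 − R'(L₀)) with 0 < R'(L₀) ≤ 1, satisfies m_BY(Σ_{L₀}) ≥ √(|Σ_H|/16π) = R(l₀)/2, where Σ_{l₀} is the outermost minimal surface (R'(l₀) = 0) and the scalar curvature condition gives F'(l) = 8πρ k R³/2 ≥ 0 with ρ ≥ 0. -/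
open Real Set

theorem localized_riemannian_penrose_inequality
    (R ρ : ℝ → ℝ) (l₀ L₀ : ℝ) (hle : l₀ ≤ L₀)
    (hRdiff : Differentiable ℝ R)
    (hRpos : ∀ l ∈ Icc l₀ L₀, R l > 0)
    (hmin : deriv R l₀ = 0)
    (hR'pos : ∀ l ∈ Ioc l₀ L₀, deriv R l > 0)
    (hR'L₀ : deriv R L₀ ≤ 1)
    (hρ : ∀ l ∈ Icc l₀ L₀, ρ l ≥ 0)
    (F : ℝ → ℝ)
    (hF : ∀ l, F l = R l * (1 - (deriv R l) ^ 2))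
    (hF' : ∀ l ∈ Icc l₀ L₀, HasDerivAt F
      (8 * π * ρ l * (2 * deriv R l / R l) * (R l) ^ 3 / 2) l) :
    R L₀ * (1 - deriv R L₀) ≥ R l₀ / 2 := by
  rcases eq_or_lt_of_le hle with heq | hlt
  · subst heq
    have hR := hRpos l₀ (by simp)
    rw [hmin]
    nlinarith
  -- F is monotone on [l₀, L₀]
  have hmono : MonotoneOn F (Icc l₀ L₀) := by
    apply monotoneOn_of_deriv_nonneg (convex_Icc _ _)
    · exact fun x hx => (hF' x hx).continuousAt.continuousWithinAt
    · intro x hx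
      rw [interior_Icc] at hx
      exact (hF' x (Ioo_subset_Icc_self hx)).differentiableAt.differentiableWithinAt
    · intro x hx
      rw [interior_Icc] at hx
      rw [(hF' x (Ioo_subset_Icc_self hx)).deriv]
      have hRx := hRpos x (Ioo_subset_Icc_self hx)
      have hρx := hρ x (Ioo_subset_Icc_self hx)
      have hR'x := hR'pos x ⟨hx.1, hx.2.le⟩
      have hπ := Real.pi_pos
      have : 0 ≤ 2 * deriv R x / R x := by positivity
      positivity
  have hFle : F l₀ ≤ F L₀ :=
    hmono (left_mem_Icc.2 hle) (right_mem_Icc.2 hle) hle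
  have hFl₀ : F l₀ = R l₀ := by rw [hF, hmin]; ring
  have hFL₀ : F L₀ = R L₀ * (1 - (deriv R L₀) ^ 2) := hF L₀
  have hr0 : 0 < deriv R L₀ := hR'pos L₀ ⟨hlt, le_refl _⟩
  have hRl₀ := hRpos l₀ (left_mem_Icc.2 hle)
  have hRL₀ := hRpos L₀ (right_mem_Icc.2 hle)
  nlinarith [mul_pos hRL₀ hr0]
end
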